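/- arXiv:2002.09051 — 2 statements merged into one kernel-verified Lean document; each statement's English description precedes it below -/
import Mathlib

section
/- Let S_1,...,S_p ⊆ {1,...,n} with |S_k| = d, and let Π_k ∈ {0,1}^{d×n} be the coordinate-extraction matrix with (Π_k z) = z_{S_k}. Define the bilinear convolution map β(z,w) = (wᵀΠ_1 z; ...; wᵀΠ_p z) for z ∈ ℝ^n, w ∈ ℝ^d. Then ‖β(z,w)‖₂ ≤ √(max_{i=1,...,n} |{k : i ∈ S_k}|) · ‖w‖₂ ‖z‖₂. -/
/-!
Each output coordinate is an inner product of `w` with a patch `z_{S_k}`, so by Cauchy–Schwarz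
`‖β(z,w)‖² ≤ ‖w‖² ∑ₖ ‖z_{S_k}‖²`. Summing over the patches counts each `z_i²` once per patch
containing `i`, which gives `∑ₖ ‖z_{S_k}‖² ≤ (maxᵢ #{k : i ∈ S_k}) ‖z‖²`.
-/

open Finset

section Patches

variable {κ ι α : Type*} [Fintype κ] [Fintype ι] [Fintype α] [DecidableEq α] (e : κ → ι ↪ α)

def patchCount (i : α) : ℕ := #{k | ∃ j, e k j = i}

theorem sum_sum_comp_embedding_eq_sum_patchCount_smul {M : Type*} [AddCommMonoid M]
    (f : α → M) : ∑ k, ∑ j, f (e k j) = ∑ i, patchCount e i • f i := by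
  have sum_patch (k : κ) : ∑ j, f (e k j) = ∑ i, if ∃ j, e k j = i then f i else 0 := by
    rw [← sum_filter, ← sum_map univ (e k)]
    congr 1
    ext i
    simp
  simp_rw [sum_patch]
  rw [sum_comm]
  simp only [← sum_filter, sum_const, patchCount]

variable {R : Type*} [CommSemiring R] [LinearOrder R] [IsStrictOrderedRing R]
  [ExistsAddOfLE R]

theorem sum_sum_sq_comp_embedding_le (z : α → R) {M : R}
    (hM : ∀ i, (patchCount e i : R) ≤ M) :
    ∑ k, ∑ j, z (e k j) ^ 2 ≤ M * ∑ i, z i ^ 2 := by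
  rw [sum_sum_comp_embedding_eq_sum_patchCount_smul e (z · ^ 2), mul_sum]
  refine sum_le_sum fun i _ => ?_
  rw [nsmul_eq_mul]
  exact mul_le_mul_of_nonneg_right (hM i) (sq_nonneg _)

theorem sum_sq_sum_mul_comp_embedding_le (w : ι → R) (z : α → R) {M : R}
    (hM : ∀ i, (patchCount e i : R) ≤ M) :
    ∑ k, (∑ j, w j * z (e k j)) ^ 2 ≤ M * (∑ j, w j ^ 2) * ∑ i, z i ^ 2 :=
  calc ∑ k, (∑ j, w j * z (e k j)) ^ 2
      ≤ ∑ k, (∑ j, w j ^ 2) * ∑ j, z (e k j) ^ 2 :=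
        sum_le_sum fun k _ => sum_mul_sq_le_sq_mul_sq _ _ _
    _ = (∑ j, w j ^ 2) * ∑ k, ∑ j, z (e k j) ^ 2 := by rw [mul_sum]
    _ ≤ (∑ j, w j ^ 2) * (M * ∑ i, z i ^ 2) :=
        mul_le_mul_of_nonneg_left (sum_sum_sq_comp_embedding_le e z hM)
          (sum_nonneg fun j _ => sq_nonneg _)
    _ = M * (∑ j, w j ^ 2) * ∑ i, z i ^ 2 := by ring

end Patches

/-- Convolution-type bilinear map: extracting `p` patches of size `d` (given by embeddings
`e k : Fin d ↪ Fin n`) and taking inner products with a filter `w`, the output satisfies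
`‖β(z,w)‖₂ ≤ √(maxᵢ #{k : i ∈ S_k}) ‖w‖₂ ‖z‖₂`. -/
theorem stmt8 {n d p : ℕ} (e : Fin p → (Fin d ↪ Fin n))
    (z : EuclideanSpace ℝ (Fin n)) (w : EuclideanSpace ℝ (Fin d)) :
    ‖(WithLp.equiv 2 (Fin p → ℝ)).symm fun k => ∑ j, w j * z (e k j)‖
      ≤ Real.sqrt (⨆ i : Fin n,
          ((Finset.univ.filter fun k : Fin p => ∃ j, e k j = i).card : ℝ)) * ‖w‖ * ‖z‖ := by
  -- not `rfl`: the statement decides `∃ j, _` by `Nat.decidableExistsFin`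
  have hcount (i : Fin n) : #{k | ∃ j, e k j = i} = patchCount e i := by
    unfold patchCount
    congr
  simp only [hcount]
  set M := ⨆ i, (patchCount e i : ℝ)
  have hM0 : 0 ≤ M := Real.iSup_nonneg fun i => Nat.cast_nonneg _
  have hM (i : Fin n) : (patchCount e i : ℝ) ≤ M :=
    le_ciSup (Finite.bddAbove_range fun i => (patchCount e i : ℝ)) i
  rw [← pow_le_pow_iff_left₀ (norm_nonneg _) (by positivity) two_ne_zero, mul_pow, mul_pow,
    Real.sq_sqrt hM0]
  simpa only [EuclideanSpace.norm_sq_eq, WithLp.equiv_symm_apply, WithLp.ofLp_toLp,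
    Real.norm_eq_abs, sq_abs] using sum_sq_sum_mul_comp_embedding_le e w z hM
end

section
/- Let ζ: ℝ^a × ℝ^b → ℝ be twice continuously differentiable such that ζ(α,·) is μ-strongly convex for every α, with L-Lipschitz gradient and H-Lipschitz Hessian. Let g(α) = argmin_β ζ(α,β). Then g is Lipschitz with constant at most L/μ. -/
/-!
Write `ζ_α = ζ(α, ·)`. Quadratic growth of the `μ`-strongly convex functions `ζ_α`, `ζ_α'` at their
minimizers gives `μ ‖g α - g α'‖² ≤ (ζ_α - ζ_α') (g α') - (ζ_α - ζ_α') (g α)`. With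
`d = (α - α', 0)`, the right side is a second difference of `ζ`, and `z ↦ ζ (z + d) - ζ z` has
derivative bounded by `L ‖d‖` since `Dζ` is `L`-Lipschitz; the mean value inequality bounds it by
`L ‖α - α'‖ ‖g α - g α'‖`.
-/

open Filter Topology

section StrongConvexity

variable {E : Type*} [NormedAddCommGroup E] [NormedSpace ℝ E] {s : Set E} {μ K : ℝ}
  {f f₁ f₂ : E → ℝ} {m u v y : E}

-- Compare `f m ≤ f (t • y + (1 - t) • m)` with strong convexity, divide by `t` and let `t → 0`.
theorem StrongConvexOn.add_norm_sq_le_of_isMinOn (hf : StrongConvexOn s μ f) (hm : IsMinOn f s m)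
    (hms : m ∈ s) (hys : y ∈ s) : f m + μ / 2 * ‖y - m‖ ^ 2 ≤ f y := by
  set c := μ / 2 * ‖y - m‖ ^ 2 with hc
  have hnear : ∀ t ∈ Set.Ioo (0 : ℝ) 1, f m + (1 - t) * c ≤ f y := by
    rintro t ⟨ht₀, ht₁⟩
    have hconv := hf.2 hys hms ht₀.le (sub_nonneg.2 ht₁.le) (add_sub_cancel t 1)
    have hmin : f m ≤ f (t • y + (1 - t) • m) := hm (hf.1 hys hms ht₀.le (sub_nonneg.2 ht₁.le)
      (add_sub_cancel t 1))
    simp only [smul_eq_mul, ← hc] at hconv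
    have hscaled : t * (f m + (1 - t) * c) ≤ t * f y := by linarith
    exact le_of_mul_le_mul_left hscaled ht₀
  have hlim : Tendsto (fun t : ℝ => f m + (1 - t) * c) (𝓝[>] 0) (𝓝 (f m + c)) := by
    simpa using ((by fun_prop : Continuous fun t : ℝ => f m + (1 - t) * c).tendsto 0).mono_left
      nhdsWithin_le_nhds
  exact le_of_tendsto hlim (eventually_of_mem (Ioo_mem_nhdsGT one_pos) hnear)

theorem StrongConvexOn.norm_sub_le_of_isMinOn (hf₁ : StrongConvexOn s μ f₁)
    (hf₂ : StrongConvexOn s μ f₂) (hu : IsMinOn f₁ s u) (hv : IsMinOn f₂ s v) (hus : u ∈ s)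
    (hvs : v ∈ s) (hμ : 0 < μ) (hK : 0 ≤ K)
    (hdiff : (f₁ v - f₂ v) - (f₁ u - f₂ u) ≤ K * ‖u - v‖) : ‖u - v‖ ≤ K / μ := by
  have h₁ := hf₁.add_norm_sq_le_of_isMinOn hu hus hvs
  have h₂ := hf₂.add_norm_sq_le_of_isMinOn hv hvs hus
  rw [norm_sub_rev] at h₁
  have hquad : μ * ‖u - v‖ ^ 2 ≤ K * ‖u - v‖ := by linarith
  rw [le_div_iff₀ hμ]
  rcases (norm_nonneg (u - v)).eq_or_lt with h | h
  · rw [← h]; simpa using hK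
  · nlinarith

end StrongConvexity

theorem norm_sub_sub_sub_le_of_norm_fderiv_sub_le {E G : Type*} [NormedAddCommGroup E]
    [NormedSpace ℝ E] [NormedAddCommGroup G] [NormedSpace ℝ G] {f : E → G} {L : ℝ}
    (hf : Differentiable ℝ f) (hL : ∀ x y, ‖fderiv ℝ f x - fderiv ℝ f y‖ ≤ L * ‖x - y‖)
    (d z w : E) : ‖(f (z + d) - f z) - (f (w + d) - f w)‖ ≤ L * ‖d‖ * ‖z - w‖ := by
  have hderiv : ∀ x ∈ Set.univ, HasFDerivWithinAt (fun x => f (x + d) - f x)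
      (fderiv ℝ f (x + d) - fderiv ℝ f x) Set.univ x := fun x _ =>
    (((hasFDerivAt_comp_add_right d).2 (hf (x + d)).hasFDerivAt).sub
      (hf x).hasFDerivAt).hasFDerivWithinAt
  have hbound : ∀ x ∈ Set.univ, ‖fderiv ℝ f (x + d) - fderiv ℝ f x‖ ≤ L * ‖d‖ := fun x _ => by
    simpa using hL (x + d) x
  exact convex_univ.norm_image_sub_le_of_norm_hasFDerivWithin_le hderiv hbound
    (Set.mem_univ w) (Set.mem_univ z)

theorem WithLp.norm_toLp_sub_toLp_right {p : ENNReal} [Fact (1 ≤ p)] {α β : Type*}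
    [SeminormedAddCommGroup α] [SeminormedAddCommGroup β] (x : α) (y y' : β) :
    ‖toLp p (x, y) - toLp p (x, y')‖ = ‖y - y'‖ := by
  rw [← toLp_sub, Prod.mk_sub_mk, sub_self, norm_toLp_snd]

theorem stmt17_general {a b : ℕ} (μ L : ℝ) (hμ : 0 < μ)
    (ζ : WithLp 2 (EuclideanSpace ℝ (Fin a) × EuclideanSpace ℝ (Fin b)) → ℝ)
    (hC : ContDiff ℝ 2 ζ)
    (hsc : ∀ α : EuclideanSpace ℝ (Fin a),
      StrongConvexOn Set.univ μ fun β : EuclideanSpace ℝ (Fin b) =>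
        ζ ((WithLp.equiv 2 _).symm (α, β)))
    (hL : ∀ x y, ‖fderiv ℝ ζ x - fderiv ℝ ζ y‖ ≤ L * ‖x - y‖)
    (g : EuclideanSpace ℝ (Fin a) → EuclideanSpace ℝ (Fin b))
    (hg : ∀ α, IsMinOn (fun β : EuclideanSpace ℝ (Fin b) =>
      ζ ((WithLp.equiv 2 _).symm (α, β))) Set.univ (g α)) :
    ∀ α α', ‖g α - g α'‖ ≤ (L / μ) * ‖α - α'‖ := by
  intro α α'
  set d := WithLp.toLp 2 (α - α', (0 : EuclideanSpace ℝ (Fin b)))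
  have hd : ‖d‖ = ‖α - α'‖ := WithLp.norm_toLp_fst ..
  have hshift : ∀ β, WithLp.toLp 2 (α', β) + d = WithLp.toLp 2 (α, β) := fun β => by
    rw [← WithLp.toLp_add, Prod.mk_add_mk, add_sub_cancel, add_zero]
  have hLd : 0 ≤ L * ‖α - α'‖ := by
    simpa [hd] using (norm_nonneg _).trans (hL d 0)
  have hsecond := norm_sub_sub_sub_le_of_norm_fderiv_sub_le (hC.differentiable (by norm_num)) hL
    d (WithLp.toLp 2 (α', g α')) (WithLp.toLp 2 (α', g α))
  rw [hshift, hshift, hd, WithLp.norm_toLp_sub_toLp_right, norm_sub_rev (g α')] at hsecond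
  calc ‖g α - g α'‖ ≤ L * ‖α - α'‖ / μ :=
        (hsc α).norm_sub_le_of_isMinOn (hsc α') (hg α) (hg α') trivial trivial hμ hLd
          ((le_abs_self _).trans hsecond)
    _ = L / μ * ‖α - α'‖ := by ring

/-- If `ζ(α,·)` is `μ`-strongly convex for every `α`, `ζ` has an `L`-Lipschitz gradient and
an `H`-Lipschitz Hessian, then `g(α) = argmin_β ζ(α,β)` is `(L/μ)`-Lipschitz. -/
theorem stmt17 {a b : ℕ} (μ L H : ℝ) (hμ : 0 < μ)
    (ζ : WithLp 2 (EuclideanSpace ℝ (Fin a) × EuclideanSpace ℝ (Fin b)) → ℝ)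
    (hC : ContDiff ℝ 2 ζ)
    (hsc : ∀ α : EuclideanSpace ℝ (Fin a),
      StrongConvexOn Set.univ μ fun β : EuclideanSpace ℝ (Fin b) =>
        ζ ((WithLp.equiv 2 _).symm (α, β)))
    (hL : ∀ x y, ‖fderiv ℝ ζ x - fderiv ℝ ζ y‖ ≤ L * ‖x - y‖)
    (hH : ∀ x y, ‖fderiv ℝ (fderiv ℝ ζ) x - fderiv ℝ (fderiv ℝ ζ) y‖ ≤ H * ‖x - y‖)
    (g : EuclideanSpace ℝ (Fin a) → EuclideanSpace ℝ (Fin b))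
    (hg : ∀ α, IsMinOn (fun β : EuclideanSpace ℝ (Fin b) =>
      ζ ((WithLp.equiv 2 _).symm (α, β))) Set.univ (g α)) :
    ∀ α α', ‖g α - g α'‖ ≤ (L / μ) * ‖α - α'‖ :=
  stmt17_general μ L hμ ζ hC hsc hL g hg
end
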